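/- Let $f(x) := \lfloor 3\sqrt{x \ln \ln(x+3)} \rfloor + 100$ and, for a positive integer $n$, let $A := 2\left(\frac{5}{2}\sqrt{\frac{n}{2} \ln \ln \frac{n+3}{2}} + 90\right)$. Then the number of sequences $x_1, \dots, x_n \in \{-1, +1\}$ such that (i) for every even integer $2i$ with $0 < 2i \leq n$ one has $\sum_{j=1}^{2i} x_j < 2 f(i)$, and (ii) $\left|\sum_{j=1}^{n} x_j\right| \leq A$, is at least $2^{n-1}$. -/

import Mathlib

/-- `f(x) = ⌊3√(x ln ln (x+3))⌋ + 100`. -/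
noncomputable def lilBound (x : ℝ) : ℕ :=
  ⌊3 * Real.sqrt (x * Real.log (Real.log (x + 3)))⌋₊ + 100

/-- `A = 2 ((5/2)√((n/2) ln ln ((n+3)/2)) + 90)`. -/
noncomputable def endWindow (n : ℕ) : ℝ :=
  2 * ((5 / 2) * Real.sqrt ((n / 2 : ℝ) * Real.log (Real.log ((n + 3 : ℝ) / 2))) + 90)

/-!
Among the `2 ^ n` sign vectors we count those violating (i) or (ii). A violation of (i) at a
time `2 i` with `2 ^ k ≤ i < 2 ^ (k + 1)` makes the walk reach `2 f(2 ^ k)` before time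
`min (2 ^ (k + 2)) n`. By the reflection principle and the Chernoff bound `cosh l ≤ exp (l² / 2)`,
this happens for at most `2 ^ n` times `2 exp (-(4 ln ln (2 ^ k + 3) + 4900 / 2 ^ k))` sign
vectors, and these weights are dominated by the telescoping series `(1/(k+1) - 1/(k+2)) / 3`.
Likewise Chernoff shows that the endpoint leaves `[-A, A]` for at most `2 ^ n · 2 e⁻⁶` sign
vectors. Altogether fewer than `2 ^ (n - 1)` sign vectors are bad.
-/

namespace PathsBelowCurve

open Finset Real

section SignVectors

variable {n : ℕ}

def signVectors (n : ℕ) : Finset (Fin n → ℤ) :=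
  Fintype.piFinset fun _ => {1, -1}

lemma mem_signVectors {x : Fin n → ℤ} : x ∈ signVectors n ↔ ∀ i, x i = 1 ∨ x i = -1 := by
  simp [signVectors]

lemma card_signVectors : #(signVectors n) = 2 ^ n := by
  simp [signVectors]

lemma neg_mem_signVectors {x : Fin n → ℤ} (hx : x ∈ signVectors n) : -x ∈ signVectors n := by
  rw [mem_signVectors] at hx ⊢
  intro i
  rcases hx i with h | h <;> simp [h]

def partialSum (x : Fin n → ℤ) (m : ℕ) : ℤ :=
  ∑ j ∈ univ.filter (fun j : Fin n => (j : ℕ) < m), x j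

lemma partialSum_of_le (x : Fin n → ℤ) {m : ℕ} (h : n ≤ m) : partialSum x m = ∑ j, x j :=
  sum_congr (filter_true_of_mem fun j _ => j.isLt.trans_le h) fun _ _ => rfl

lemma partialSum_neg (x : Fin n → ℤ) (m : ℕ) : partialSum (-x) m = -partialSum x m := by
  simp [partialSum]

end SignVectors

section Chernoff

variable {n : ℕ}

lemma sum_exp_mul_partialSum (l : ℝ) (M : ℕ) :
    ∑ x ∈ signVectors n, exp (l * partialSum x M) =
      ∏ j : Fin n, if (j : ℕ) < M then 2 * cosh l else 2 := by
  calc ∑ x ∈ signVectors n, exp (l * partialSum x M)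
      = ∑ x ∈ signVectors n, ∏ j : Fin n, if (j : ℕ) < M then exp (l * x j) else 1 := by
        refine sum_congr rfl fun x _ => ?_
        rw [← prod_filter, ← exp_sum, partialSum, Int.cast_sum, mul_sum]
    _ = ∏ j : Fin n, ∑ s ∈ ({1, -1} : Finset ℤ), if (j : ℕ) < M then exp (l * s) else 1 := by
        rw [prod_univ_sum]
        rfl
    _ = ∏ j : Fin n, if (j : ℕ) < M then 2 * cosh l else 2 := by
        refine prod_congr rfl fun j _ => ?_
        split_ifs
        · norm_num [cosh_eq]
          ring
        · norm_num

lemma sum_exp_mul_partialSum_le (l : ℝ) (M : ℕ) :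
    ∑ x ∈ signVectors n, exp (l * partialSum x M) ≤ 2 ^ n * exp (M * (l ^ 2 / 2)) := by
  rw [sum_exp_mul_partialSum]
  calc ∏ j : Fin n, (if (j : ℕ) < M then 2 * cosh l else 2)
      ≤ ∏ j : Fin n, 2 * (if (j : ℕ) < M then exp (l ^ 2 / 2) else 1) := by
        refine prod_le_prod (fun j _ => by split_ifs <;> positivity) fun j _ => ?_
        split_ifs
        · exact mul_le_mul_of_nonneg_left (cosh_le_exp_half_sq l) zero_le_two
        · simp
    _ ≤ 2 ^ n * exp (M * (l ^ 2 / 2)) := by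
        rw [prod_mul_distrib, prod_const, card_univ, Fintype.card_fin, ← prod_filter,
          prod_const, Fin.card_filter_val_lt, ← exp_nat_mul]
        gcongr
        exact_mod_cast min_le_right n M

/-- Chernoff's bound for the simple random walk. -/
lemma card_le_partialSum_le {M : ℕ} (hM : 0 < M) {t : ℝ} (ht : 0 < t) :
    (#{x ∈ signVectors n | t ≤ partialSum x M} : ℝ) ≤ 2 ^ n * exp (-t ^ 2 / (2 * M)) := by
  set l : ℝ := t / M with hl_def
  have hl : 0 ≤ l := by positivity
  have hmarkov : (#{x ∈ signVectors n | t ≤ partialSum x M} : ℝ) * exp (l * t) ≤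
      ∑ x ∈ signVectors n, exp (l * partialSum x M) := by
    rw [← nsmul_eq_mul]
    refine (card_nsmul_le_sum _ _ _ fun x hx => ?_).trans
      (sum_le_sum_of_subset_of_nonneg (filter_subset _ _) fun _ _ _ => (exp_pos _).le)
    exact exp_le_exp.2 (mul_le_mul_of_nonneg_left (mem_filter.1 hx).2 hl)
  have hexp : exp (M * (l ^ 2 / 2)) = exp (-t ^ 2 / (2 * M)) * exp (l * t) := by
    rw [← exp_add, hl_def]
    congr 1
    field_simp
    ring
  have := hmarkov.trans (sum_exp_mul_partialSum_le l M)
  rw [hexp, ← mul_assoc] at this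
  exact le_of_mul_le_mul_right this (exp_pos _)

lemma card_le_abs_partialSum_le {M : ℕ} (hM : 0 < M) {t : ℝ} (ht : 0 < t) :
    (#{x ∈ signVectors n | t ≤ |(partialSum x M : ℝ)|} : ℝ) ≤
      2 * (2 ^ n * exp (-t ^ 2 / (2 * M))) := by
  have hsplit : {x ∈ signVectors n | t ≤ |(partialSum x M : ℝ)|} ⊆
      {x ∈ signVectors n | t ≤ partialSum x M} ∪ {x ∈ signVectors n | t ≤ -partialSum x M} := by
    intro x
    simp only [mem_filter, mem_union]
    rcases abs_choice (partialSum x M : ℝ) with h | h <;> rw [h] <;> tauto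
  have hneg : #{x ∈ signVectors n | t ≤ -partialSum x M} ≤
      #{x ∈ signVectors n | t ≤ partialSum x M} := by
    refine card_le_card_of_injOn (fun x => -x) (fun x hx => ?_) neg_injective.injOn
    simp only [mem_coe, mem_filter, partialSum_neg] at hx ⊢
    exact ⟨neg_mem_signVectors hx.1, by exact_mod_cast hx.2⟩
  have hcard := (card_le_card hsplit).trans (card_union_le _ _)
  have hcardR : (#{x ∈ signVectors n | t ≤ |(partialSum x M : ℝ)|} : ℝ) ≤
      2 * #{x ∈ signVectors n | t ≤ partialSum x M} := by
    exact_mod_cast hcard.trans (by omega)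
  linarith [card_le_partialSum_le (n := n) hM ht]

end Chernoff

section Reflection

variable {n : ℕ}

def reflectFrom (x : Fin n → ℤ) (T : ℕ) : Fin n → ℤ :=
  fun j => if (j : ℕ) < T then x j else -x j

lemma reflectFrom_reflectFrom (x : Fin n → ℤ) (T : ℕ) : reflectFrom (reflectFrom x T) T = x := by
  funext j
  by_cases h : (j : ℕ) < T <;> simp [reflectFrom, h]

lemma reflectFrom_mem_signVectors {x : Fin n → ℤ} (hx : x ∈ signVectors n) (T : ℕ) :
    reflectFrom x T ∈ signVectors n := by
  rw [mem_signVectors] at hx ⊢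
  intro j
  by_cases h : (j : ℕ) < T <;> rcases hx j with hj | hj <;> simp [reflectFrom, h, hj]

lemma partialSum_reflectFrom_of_le (x : Fin n → ℤ) {T m : ℕ} (h : m ≤ T) :
    partialSum (reflectFrom x T) m = partialSum x m := by
  refine sum_congr rfl fun j hj => ?_
  simp [reflectFrom, ((mem_filter.1 hj).2.trans_le h)]

lemma partialSum_reflectFrom_of_ge (x : Fin n → ℤ) {T m : ℕ} (h : T ≤ m) :
    partialSum (reflectFrom x T) m = 2 * partialSum x T - partialSum x m := by
  simp only [partialSum, sum_filter, mul_sum, ← sum_sub_distrib]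
  refine sum_congr rfl fun j _ => ?_
  simp only [reflectFrom]
  split_ifs <;> omega

/-- The first time the partial sums of `x` reach `L`, and `0` if they never do. -/
noncomputable def hittingTime (x : Fin n → ℤ) (L : ℤ) : ℕ :=
  sInf {m | L ≤ partialSum x m}

lemma hittingTime_le {x : Fin n → ℤ} {L : ℤ} {m : ℕ} (h : L ≤ partialSum x m) :
    hittingTime x L ≤ m :=
  Nat.sInf_le h

lemma le_partialSum_hittingTime {x : Fin n → ℤ} {L : ℤ} (h : ∃ m, L ≤ partialSum x m) :
    L ≤ partialSum x (hittingTime x L) :=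
  Nat.sInf_mem h

lemma hittingTime_reflectFrom {x : Fin n → ℤ} {L : ℤ} (h : ∃ m, L ≤ partialSum x m) :
    hittingTime (reflectFrom x (hittingTime x L)) L = hittingTime x L := by
  have hreach : L ≤ partialSum (reflectFrom x (hittingTime x L)) (hittingTime x L) := by
    rw [partialSum_reflectFrom_of_le x le_rfl]
    exact le_partialSum_hittingTime h
  refine le_antisymm (hittingTime_le hreach) (le_of_not_gt fun hlt => ?_)
  have hreach' := le_partialSum_hittingTime ⟨_, hreach⟩
  rw [partialSum_reflectFrom_of_le x hlt.le] at hreach'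
  exact Nat.notMem_of_lt_sInf hlt hreach'

/-- The reflection principle. -/
lemma card_exists_le_partialSum_le (M : ℕ) (L : ℤ) :
    #{x ∈ signVectors n | ∃ m ≤ M, L ≤ partialSum x m} ≤
      2 * #{x ∈ signVectors n | L ≤ partialSum x M} := by
  set reflect : (Fin n → ℤ) → Fin n → ℤ := fun x => reflectFrom x (hittingTime x L)
  have hinvol : ∀ {x}, (∃ m, L ≤ partialSum x m) → reflect (reflect x) = x := fun h => by
    simp only [reflect]
    rw [hittingTime_reflectFrom h, reflectFrom_reflectFrom]
  have hsplit : {x ∈ signVectors n | ∃ m ≤ M, L ≤ partialSum x m} ⊆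
      {x ∈ signVectors n | L ≤ partialSum x M} ∪
        {x ∈ signVectors n | (∃ m ≤ M, L ≤ partialSum x m) ∧ partialSum x M < L} := by
    intro x
    simp only [mem_filter, mem_union]
    rcases le_or_gt L (partialSum x M) with h | h <;> tauto
  -- Reflecting after the hitting time sends a path ending below `L` to one ending above `L`.
  have hreflect : #{x ∈ signVectors n | (∃ m ≤ M, L ≤ partialSum x m) ∧ partialSum x M < L} ≤
      #{x ∈ signVectors n | L ≤ partialSum x M} := by
    refine card_le_card_of_injOn reflect (fun x hx => ?_) fun x hx y hy hxy => ?_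
    · simp only [mem_coe, mem_filter] at hx ⊢
      obtain ⟨hx, ⟨m, hmM, hm⟩, hxM⟩ := hx
      have hτM : hittingTime x L ≤ M := (hittingTime_le hm).trans hmM
      have hτ : L ≤ partialSum x (hittingTime x L) := le_partialSum_hittingTime ⟨m, hm⟩
      refine ⟨reflectFrom_mem_signVectors hx _, ?_⟩
      rw [partialSum_reflectFrom_of_ge x hτM]
      omega
    · simp only [mem_coe, mem_filter] at hx hy
      obtain ⟨-, ⟨m, -, hm⟩, -⟩ := hx
      obtain ⟨-, ⟨m', -, hm'⟩, -⟩ := hy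
      calc x = reflect (reflect x) := (hinvol ⟨m, hm⟩).symm
        _ = reflect (reflect y) := by rw [hxy]
        _ = y := hinvol ⟨m', hm'⟩
  have := (card_le_card hsplit).trans (card_union_le _ _)
  omega

end Reflection

section Estimates

lemma one_le_log_of_three_le {y : ℝ} (hy : 3 ≤ y) : 1 ≤ log y := by
  rw [le_log_iff_exp_le (by linarith)]
  linarith [exp_one_lt_three]

lemma one_le_log_log {y : ℝ} (hy : 27 ≤ y) : 1 ≤ log (log y) := by
  refine one_le_log_of_three_le ?_
  rw [le_log_iff_exp_le (by linarith)]
  calc exp 3 = exp 1 ^ 3 := by rw [← exp_nat_mul]; norm_num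
    _ ≤ 3 ^ 3 := by gcongr; exact exp_one_lt_three.le
    _ ≤ y := by linarith

lemma log_log_nonneg {x : ℝ} (hx : 0 ≤ x) : 0 ≤ log (log (x + 3)) :=
  log_nonneg (one_le_log_of_three_le (by linarith))

lemma lilBound_mono {x y : ℝ} (hx : 0 ≤ x) (hxy : x ≤ y) : lilBound x ≤ lilBound y := by
  have hlog : log (log (x + 3)) ≤ log (log (y + 3)) :=
    log_le_log (by linarith [one_le_log_of_three_le (by linarith : (3 : ℝ) ≤ x + 3)])
      (log_le_log (by linarith) (by linarith))
  unfold lilBound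
  gcongr
  exacts [log_log_nonneg hx, hx.trans hxy]

lemma le_lilBound (x : ℝ) : 3 * √(x * log (log (x + 3))) + 99 ≤ lilBound x := by
  have := Nat.sub_one_lt_floor (3 * √(x * log (log (x + 3))))
  unfold lilBound
  push_cast
  linarith

lemma exponent_le_sq_div (k : ℕ) {M : ℕ} (hM : 0 < M) (hMk : M ≤ 2 ^ (k + 2)) :
    4 * log (log (2 ^ k + 3)) + 4900 / 2 ^ k ≤ (2 * lilBound (2 ^ k) : ℝ) ^ 2 / (2 * M) := by
  set c := log (log ((2 : ℝ) ^ k + 3))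
  have hc : 0 ≤ c := log_log_nonneg (by positivity)
  have h2k : (0 : ℝ) < 2 ^ k := by positivity
  have hsqrt : √(2 ^ k * c) ^ 2 = 2 ^ k * c := sq_sqrt (by positivity)
  have hL : 6 * √(2 ^ k * c) + 198 ≤ (2 * lilBound (2 ^ k) : ℝ) := by
    linarith [le_lilBound (2 ^ k)]
  have hLsq : 36 * (2 ^ k * c) + 39204 ≤ (2 * lilBound (2 ^ k) : ℝ) ^ 2 := by
    nlinarith [sqrt_nonneg (2 ^ k * c)]
  have hM' : (2 * M : ℝ) ≤ 8 * 2 ^ k := by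
    have : (M : ℝ) ≤ 2 ^ (k + 2) := by exact_mod_cast hMk
    rw [pow_add] at this
    linarith
  rw [le_div_iff₀ (by positivity)]
  calc (4 * c + 4900 / 2 ^ k) * (2 * M) ≤ (4 * c + 4900 / 2 ^ k) * (8 * 2 ^ k) := by
        gcongr
    _ = 32 * (2 ^ k * c) + 39200 := by field_simp; ring
    _ ≤ (2 * lilBound (2 ^ k) : ℝ) ^ 2 := by nlinarith

lemma two_mul_exp_neg_exponent_le (k : ℕ) :
    2 * exp (-(4 * log (log (2 ^ k + 3)) + 4900 / 2 ^ k)) ≤ (1 / (k + 1) - 1 / (k + 2)) / 3 := by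
  set c := log (log ((2 : ℝ) ^ k + 3))
  have hc : 0 ≤ c := log_log_nonneg (by positivity)
  have h2k : (0 : ℝ) < 2 ^ k := by positivity
  have htarget : (1 / (k + 1) - 1 / (k + 2)) / 3 = 1 / (3 * ((k + 1) * (k + 2)) : ℝ) := by
    field_simp
    ring
  rw [htarget]
  rcases lt_or_ge k 8 with hk | hk
  · -- For small `k` the term `4900 / 2 ^ k` alone suffices.
    have hq : 38 ≤ 4900 / (2 : ℝ) ^ k := by
      have : (2 : ℝ) ^ k ≤ 2 ^ 7 := pow_le_pow_right₀ one_le_two (by omega)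
      rw [le_div_iff₀ h2k]
      linarith
    have hexp38 : 761 ≤ exp 38 := by
      have := quadratic_le_exp_of_nonneg (x := 38) (by norm_num)
      norm_num at this
      linarith
    have hkR : (k : ℝ) ≤ 7 := by exact_mod_cast Nat.le_of_lt_succ hk
    calc 2 * exp (-(4 * c + 4900 / 2 ^ k)) ≤ 2 * exp (-38) := by
          gcongr
          linarith
      _ ≤ 2 / 761 := by
          rw [exp_neg, ← div_eq_mul_inv]
          gcongr
      _ ≤ 1 / (3 * ((k + 1) * (k + 2))) := by
          rw [div_le_div_iff₀ (by norm_num) (by positivity)]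
          nlinarith
  · -- For large `k` the decay `(log (2 ^ k + 3)) ^ (-4) ≤ (k log 2) ^ (-4)` suffices.
    have hkR : (8 : ℝ) ≤ k := by exact_mod_cast hk
    have hlog : 0.69 * k ≤ log (2 ^ k + 3) := by
      calc 0.69 * (k : ℝ) ≤ k * log 2 := by nlinarith [log_two_gt_d9]
        _ = log (2 ^ k) := by rw [log_pow]
        _ ≤ log (2 ^ k + 3) := log_le_log h2k (by linarith)
    have hexp : exp (4 * c) = log (2 ^ k + 3) ^ 4 := by
      rw [show (4 : ℝ) * c = ((4 : ℕ) : ℝ) * c by norm_num, exp_nat_mul,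
        exp_log (by linarith)]
    have hpoly : 6 * ((k + 1) * (k + 2)) ≤ (0.69 * k : ℝ) ^ 4 := by
      nlinarith [mul_le_mul hkR hkR (by norm_num) (by linarith)]
    calc 2 * exp (-(4 * c + 4900 / 2 ^ k)) ≤ 2 * exp (-(4 * c)) := by
          gcongr
          linarith [div_pos (by norm_num : (0 : ℝ) < 4900) h2k]
      _ = 2 / log (2 ^ k + 3) ^ 4 := by rw [exp_neg, hexp, div_eq_mul_inv]
      _ ≤ 2 / (0.69 * k) ^ 4 := by gcongr
      _ ≤ 1 / (3 * ((k + 1) * (k + 2))) := by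
          rw [div_le_div_iff₀ (by positivity) (by positivity)]
          linarith

end Estimates

section Counting

variable {n : ℕ}

open scoped Classical in
noncomputable def curveViolators (n : ℕ) : Finset (Fin n → ℤ) :=
  {x ∈ signVectors n | ∃ i : ℕ, 0 < 2 * i ∧ 2 * i ≤ n ∧ 2 * (lilBound i : ℤ) ≤ partialSum x (2 * i)}

noncomputable def windowViolators (n : ℕ) : Finset (Fin n → ℤ) :=
  {x ∈ signVectors n | endWindow n < |(partialSum x n : ℝ)|}

lemma card_block_le (k : ℕ) (hn : 0 < n) :
    (#{x ∈ signVectors n |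
        ∃ m ≤ min (2 ^ (k + 2)) n, 2 * (lilBound (2 ^ k) : ℤ) ≤ partialSum x m} : ℝ) ≤
      2 ^ n * ((1 / (k + 1) - 1 / (k + 2)) / 3) := by
  set M := min (2 ^ (k + 2)) n
  set L : ℤ := 2 * (lilBound (2 ^ k) : ℤ)
  have hM : 0 < M := lt_min (by positivity) hn
  have hL : (0 : ℝ) < L := by
    have : 0 < lilBound (2 ^ k) := Nat.add_pos_right _ (by norm_num)
    positivity
  have hcast : {x ∈ signVectors n | L ≤ partialSum x M} =
      {x ∈ signVectors n | (L : ℝ) ≤ partialSum x M} :=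
    filter_congr fun _ _ => Int.cast_le.symm
  have hexp : exp (-(L : ℝ) ^ 2 / (2 * M)) ≤
      exp (-(4 * log (log (2 ^ k + 3)) + 4900 / 2 ^ k)) := by
    rw [exp_le_exp, neg_div, neg_le_neg_iff]
    push_cast [L]
    exact exponent_le_sq_div k hM (min_le_left _ _)
  calc (#{x ∈ signVectors n | ∃ m ≤ M, L ≤ partialSum x m} : ℝ)
      ≤ 2 * #{x ∈ signVectors n | L ≤ partialSum x M} := by
        exact_mod_cast card_exists_le_partialSum_le M L
    _ ≤ 2 * (2 ^ n * exp (-(L : ℝ) ^ 2 / (2 * M))) := by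
        rw [hcast]
        gcongr
        exact card_le_partialSum_le hM hL
    _ ≤ 2 ^ n * (2 * exp (-(4 * log (log (2 ^ k + 3)) + 4900 / 2 ^ k))) := by
        rw [mul_left_comm]
        gcongr
    _ ≤ 2 ^ n * ((1 / (k + 1) - 1 / (k + 2)) / 3) := by
        gcongr
        exact two_mul_exp_neg_exponent_le k

lemma card_curveViolators_le : (#(curveViolators n) : ℝ) ≤ 2 ^ n / 3 := by
  -- A violation at time `2 i` with `2 ^ k ≤ i < 2 ^ (k + 1)` lies in the `k`-th dyadic block.
  have hcover : curveViolators n ⊆ (range n).biUnion fun k => {x ∈ signVectors n |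
      ∃ m ≤ min (2 ^ (k + 2)) n, 2 * (lilBound (2 ^ k) : ℤ) ≤ partialSum x m} := by
    intro x hx
    simp only [curveViolators, mem_filter] at hx
    obtain ⟨hx, i, hi0, hin, hi⟩ := hx
    set k := Nat.log 2 i
    have hki : 2 ^ k ≤ i := Nat.pow_log_le_self 2 (by omega)
    have hik : i < 2 ^ (k + 1) := Nat.lt_pow_succ_log_self one_lt_two i
    have hkn : k < n := by have := @Nat.lt_two_pow_self k; omega
    have hmono : lilBound (2 ^ k) ≤ lilBound i := lilBound_mono (by positivity) (by exact_mod_cast hki)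
    refine mem_biUnion.2 ⟨k, mem_range.2 hkn, mem_filter.2 ⟨hx, 2 * i, ?_, ?_⟩⟩
    · exact le_min (by rw [pow_succ] at hik ⊢; omega) hin
    · have : (lilBound (2 ^ k) : ℤ) ≤ lilBound i := by exact_mod_cast hmono
      omega
  have htelescope : ∑ k ∈ range n, (1 / ((k : ℝ) + 1) - 1 / (k + 2)) ≤ 1 := by
    have := sum_range_sub' (fun k : ℕ => 1 / ((k : ℝ) + 1)) n
    simp only [Nat.cast_add, Nat.cast_one, add_assoc, one_add_one_eq_two] at this
    rw [this, Nat.cast_zero, zero_add, div_one, sub_le_self_iff]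
    positivity
  calc (#(curveViolators n) : ℝ)
      ≤ ∑ k ∈ range n, (#{x ∈ signVectors n |
          ∃ m ≤ min (2 ^ (k + 2)) n, 2 * (lilBound (2 ^ k) : ℤ) ≤ partialSum x m} : ℝ) := by
        exact_mod_cast (card_le_card hcover).trans card_biUnion_le
    _ ≤ ∑ k ∈ range n, 2 ^ n * ((1 / ((k : ℝ) + 1) - 1 / (k + 2)) / 3) :=
        sum_le_sum fun k hk => card_block_le k (Nat.zero_lt_of_lt (mem_range.1 hk))
    _ = 2 ^ n * (∑ k ∈ range n, (1 / ((k : ℝ) + 1) - 1 / (k + 2))) / 3 := by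
        rw [← mul_sum, ← sum_div, mul_div_assoc]
    _ ≤ 2 ^ n / 3 := by
        gcongr
        exact mul_le_of_le_one_right (by positivity) htelescope

lemma six_le_endWindow_sq_div (hn : 0 < n) : 6 ≤ endWindow n ^ 2 / (2 * n) := by
  set c := log (log (((n : ℝ) + 3) / 2))
  have hA : endWindow n = 5 * √(n / 2 * c) + 180 := by
    unfold endWindow
    ring
  have hnR : (0 : ℝ) < n := by exact_mod_cast hn
  rw [le_div_iff₀ (by positivity), hA]
  rcases le_or_gt (n : ℝ) 2700 with hsmall | hlarge
  · nlinarith [sqrt_nonneg (n / 2 * c)]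
  · have hc : 1 ≤ c := one_le_log_log (by linarith)
    have hsqrt : √(n / 2 * c) ^ 2 = n / 2 * c := sq_sqrt (by positivity)
    nlinarith [sqrt_nonneg (n / 2 * c)]

lemma card_windowViolators_le (hn : 0 < n) : (#(windowViolators n) : ℝ) ≤ 2 ^ n * (2 / 25) := by
  have hA : 0 < endWindow n := by
    unfold endWindow
    positivity
  have hexp6 : 25 ≤ exp 6 := by
    have := quadratic_le_exp_of_nonneg (x := 6) (by norm_num)
    norm_num at this
    linarith
  calc (#(windowViolators n) : ℝ)
      ≤ #{x ∈ signVectors n | endWindow n ≤ |(partialSum x n : ℝ)|} := by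
        refine Nat.cast_le.2 (card_le_card fun x hx => ?_)
        simp only [windowViolators, mem_filter] at hx ⊢
        exact ⟨hx.1, hx.2.le⟩
    _ ≤ 2 * (2 ^ n * exp (-endWindow n ^ 2 / (2 * n))) := card_le_abs_partialSum_le hn hA
    _ ≤ 2 * (2 ^ n * exp (-6)) := by
        gcongr
        rw [neg_div, neg_le_neg_iff]
        exact six_le_endWindow_sq_div hn
    _ ≤ 2 ^ n * (2 / 25) := by
        rw [mul_left_comm, exp_neg]
        gcongr
        rw [← div_eq_mul_inv]
        gcongr

lemma two_pow_pred_le_card_sdiff_violators (hn : 0 < n) :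
    2 ^ (n - 1) ≤ #(signVectors n \ (curveViolators n ∪ windowViolators n)) := by
  have hbad : curveViolators n ∪ windowViolators n ⊆ signVectors n := fun x hx => by
    simp only [mem_union, curveViolators, windowViolators, mem_filter] at hx
    tauto
  have hcount : (#(signVectors n \ (curveViolators n ∪ windowViolators n)) : ℝ) +
      #(curveViolators n ∪ windowViolators n) = 2 ^ n := by
    exact_mod_cast (card_sdiff_add_card_eq_card hbad).trans card_signVectors
  have hunion : (#(curveViolators n ∪ windowViolators n) : ℝ) ≤
      #(curveViolators n) + #(windowViolators n) := by
    exact_mod_cast card_union_le _ _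
  have hpow : (2 : ℝ) ^ n = 2 * 2 ^ (n - 1) := by rw [← pow_succ', Nat.sub_add_cancel hn]
  have : (2 : ℝ) ^ (n - 1) ≤ #(signVectors n \ (curveViolators n ∪ windowViolators n)) := by
    linarith [card_curveViolators_le (n := n), card_windowViolators_le hn,
      pow_pos (two_pos : (0 : ℝ) < 2) n]
  exact_mod_cast this

end Counting

end PathsBelowCurve

open PathsBelowCurve in
/-- The number of `±1` sequences of length `n` whose partial sums stay strictly below
`2 f(i)` at every even time `2i ≤ n` and whose total sum lies in `[-A, A]` is at
least `2^{n-1}`. -/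
theorem paths_below_curve_count (n : ℕ) (hn : 0 < n) :
    2 ^ (n - 1) ≤
      ({x : Fin n → ℤ |
          (∀ i, x i = 1 ∨ x i = -1) ∧
          (∀ i : ℕ, 0 < 2 * i → 2 * i ≤ n →
            (∑ j ∈ Finset.univ.filter (fun j : Fin n => (j : ℕ) < 2 * i), x j)
              < 2 * (lilBound i : ℤ)) ∧
          (|(∑ j, x j : ℤ)| : ℝ) ≤ endWindow n}).ncard := by
  refine (two_pow_pred_le_card_sdiff_violators hn).trans_eq ?_
  rw [← Set.ncard_coe_finset]
  congr 1
  ext x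
  simp only [Finset.coe_sdiff, Set.mem_sdiff, Finset.mem_coe, Finset.mem_union, curveViolators,
    windowViolators, Finset.mem_filter, mem_signVectors, partialSum_of_le x le_rfl,
    Set.mem_ofPred_eq]
  unfold partialSum
  push Not
  tauto
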